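/- arXiv:2407.16012 — 2 statements merged into one kernel-verified Lean document; each statement's English description precedes it below -/
import Mathlib

section
/- Post data processing inequality: let V : Fin m → Matrix (Fin d) (Fin d) ℂ be Kraus operators satisfying ∑_{l} (V l)ᴴ * V l = 1, and let 𝒩(A) = ∑_{l} V l * A * (V l)ᴴ be the induced quantum channel. Then G(ρ, p) ≤ G(fun x => 𝒩(ρ x), p): guessing the label from the output of the channel is at least as hard as guessing it from the input state. -/
open Matrix BigOperators Finset ComplexOrder

noncomputable section

/-- A POVM indexed by a finite type `Y` in dimension `d`. -/
def IsPOVM {d : ℕ} {Y : Type*} [Fintype Y] (E : Y → Matrix (Fin d) (Fin d) ℂ) : Prop :=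
  (∀ y, (E y).PosSemidef) ∧ ∑ y, E y = 1

/-- Guesswork of the strategy (POVM) `E` indexed by permutations:
`Ĝ(ρ,p;E) = ∑_σ ∑_t t · p(σ(t)) · Re Tr(E_σ ρ_{σ(t)})`. -/
def Ghat {d n : ℕ} (ρ : Fin n → Matrix (Fin d) (Fin d) ℂ) (p : Fin n → ℝ)
    (E : Equiv.Perm (Fin n) → Matrix (Fin d) (Fin d) ℂ) : ℝ :=
  ∑ σ : Equiv.Perm (Fin n), ∑ t : Fin n,
    ((t.val : ℝ) + 1) * p (σ t) * ((E σ * ρ (σ t)).trace.re)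

/-- The quantum guesswork: infimum of `Ĝ` over all POVMs indexed by `S_n`. -/
def QGuesswork {d n : ℕ} (ρ : Fin n → Matrix (Fin d) (Fin d) ℂ) (p : Fin n → ℝ) : ℝ :=
  ⨅ E : {E : Equiv.Perm (Fin n) → Matrix (Fin d) (Fin d) ℂ // IsPOVM E}, Ghat ρ p E.1

/-- The optimally ordered classical guesswork of a POVM indexed by a finite type `Y`. -/
def Gopt {d n : ℕ} (ρ : Fin n → Matrix (Fin d) (Fin d) ℂ) (p : Fin n → ℝ)
    {Y : Type*} [Fintype Y] (E : Y → Matrix (Fin d) (Fin d) ℂ) : ℝ :=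
  ∑ y : Y, ⨅ τ : Equiv.Perm (Fin n),
    ∑ i : Fin n, (((τ i).val : ℝ) + 1) * p i * ((E y * ρ i).trace.re)

/-- `𝓔_σ = ∑_t (2t - n - 1) p(σ(t)) ρ_{σ(t)}`. -/
def calE {d n : ℕ} (ρ : Fin n → Matrix (Fin d) (Fin d) ℂ) (p : Fin n → ℝ)
    (σ : Equiv.Perm (Fin n)) : Matrix (Fin d) (Fin d) ℂ :=
  ∑ t : Fin n, ((2 * ((t.val : ℝ) + 1) - n - 1) * p (σ t)) • ρ (σ t)

/-- Functional calculus `f(A)` of a real function on a Hermitian matrix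
(junk value `0` if `A` is not Hermitian). -/
def herApply {d : ℕ} (f : ℝ → ℝ) (A : Matrix (Fin d) (Fin d) ℂ) :
    Matrix (Fin d) (Fin d) ℂ :=
  if hA : A.IsHermitian then
    (hA.eigenvectorUnitary : Matrix (Fin d) (Fin d) ℂ) *
      Matrix.diagonal (fun i => (f (hA.eigenvalues i) : ℂ)) *
      star (hA.eigenvectorUnitary : Matrix (Fin d) (Fin d) ℂ)
  else 0

/-- `|A|`, the absolute value of a Hermitian matrix. -/
def matAbs {d : ℕ} (A : Matrix (Fin d) (Fin d) ℂ) : Matrix (Fin d) (Fin d) ℂ :=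
  herApply (fun x => |x|) A

/-- Trace norm `‖A‖ = Re Tr |A|` of a Hermitian matrix. -/
def traceNorm {d : ℕ} (A : Matrix (Fin d) (Fin d) ℂ) : ℝ :=
  (matAbs A).trace.re

/-- The reversed permutation `σ̄(t) = σ(n+1-t)`. -/
def permBar {n : ℕ} (σ : Equiv.Perm (Fin n)) : Equiv.Perm (Fin n) :=
  σ * Fin.revPerm

/-- `g(λ) = 1` for `λ < 0`, `1/2` for `λ = 0`, `0` for `λ > 0`. -/
def gNeg : ℝ → ℝ := fun x => if x < 0 then 1 else if x = 0 then 1 / 2 else 0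

/-- Dall'Arno's POVM `E^{σ*}`. -/
def povmStar {d n : ℕ} (ρ : Fin n → Matrix (Fin d) (Fin d) ℂ) (p : Fin n → ℝ)
    (σs : Equiv.Perm (Fin n)) : Equiv.Perm (Fin n) → Matrix (Fin d) (Fin d) ℂ :=
  fun σ => if σ = σs ∨ σ = permBar σs then herApply gNeg (calE ρ p σ) else 0



/-- Shannon entropy in bits. -/
def shannonH {n : ℕ} (p : Fin n → ℝ) : ℝ := -∑ x, p x * Real.logb 2 (p x)

/-- Von Neumann entropy in bits (junk value `0` for non-Hermitian matrices). -/
def vonNeumann {d : ℕ} (A : Matrix (Fin d) (Fin d) ℂ) : ℝ :=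
  if hA : A.IsHermitian then -∑ i, hA.eigenvalues i * Real.logb 2 (hA.eigenvalues i) else 0

/-- Holevo information of the ensemble, in bits. -/
def holevoInfo {d n : ℕ} (ρ : Fin n → Matrix (Fin d) (Fin d) ℂ) (p : Fin n → ℝ) : ℝ :=
  vonNeumann (∑ x, p x • ρ x) - ∑ x, p x * vonNeumann (ρ x)

lemma psd_trace_re_nonneg {d : ℕ} {A : Matrix (Fin d) (Fin d) ℂ} (hA : A.PosSemidef) :
    0 ≤ A.trace.re := by
  rw [Matrix.trace]
  simp only [Complex.re_sum]
  refine Finset.sum_nonneg fun i _ => ?_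
  have := hA.re_dotProduct_nonneg (Pi.single i 1)
  simpa [dotProduct, Pi.single_apply, Finset.sum_ite_eq, apply_ite] using this

lemma psd_mul_trace_re_nonneg {d : ℕ} {A B : Matrix (Fin d) (Fin d) ℂ}
    (hA : A.PosSemidef) (hB : B.PosSemidef) : 0 ≤ (A * B).trace.re := by
  obtain ⟨S, hS, hSS⟩ : ∃ S : Matrix (Fin d) (Fin d) ℂ, S.PosSemidef ∧ S * S = A :=
    open scoped MatrixOrder in
      ⟨CFC.sqrt A, (CFC.sqrt_nonneg A).posSemidef, CFC.sqrt_mul_sqrt_self A hA.nonneg⟩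
  have h1 : A * B = S * (S * B) := by rw [← mul_assoc, hSS]
  rw [h1, Matrix.trace_mul_comm, mul_assoc]
  have h2 : (S * B * S).PosSemidef := by
    have := hB.conjTranspose_mul_mul_same S
    rwa [hS.isHermitian.eq] at this
  exact psd_trace_re_nonneg (by rwa [mul_assoc] at h2)

lemma psd_sum {d : ℕ} {ι : Type*} [Fintype ι] {f : ι → Matrix (Fin d) (Fin d) ℂ}
    (hf : ∀ i, (f i).PosSemidef) : (∑ i, f i).PosSemidef := by
  classical
  induction (Finset.univ : Finset ι) using Finset.induction_on with
  | empty => simpa using Matrix.PosSemidef.zero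
  | insert _ _ h ih => rw [Finset.sum_insert h]; exact (hf _).add ih

lemma ghat_nonneg {d n : ℕ} {ρ : Fin n → Matrix (Fin d) (Fin d) ℂ} {p : Fin n → ℝ}
    (hρ : ∀ x, (ρ x).PosSemidef) (hp : ∀ x, 0 ≤ p x)
    {E : Equiv.Perm (Fin n) → Matrix (Fin d) (Fin d) ℂ} (hE : ∀ σ, (E σ).PosSemidef) :
    0 ≤ Ghat ρ p E := by
  refine Finset.sum_nonneg fun σ _ => Finset.sum_nonneg fun t _ => ?_
  have h1 : (0:ℝ) ≤ (t.val : ℝ) + 1 := by positivity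
  exact mul_nonneg (mul_nonneg h1 (hp _)) (psd_mul_trace_re_nonneg (hE σ) (hρ _))

lemma trace_adj_channel {d m : ℕ} (V : Fin m → Matrix (Fin d) (Fin d) ℂ)
    (W R : Matrix (Fin d) (Fin d) ℂ) :
    ((∑ l, (V l)ᴴ * W * V l) * R).trace = (W * ∑ l, V l * R * (V l)ᴴ).trace := by
  simp only [Finset.sum_mul, Finset.mul_sum, Matrix.trace_sum]
  refine Finset.sum_congr rfl fun l _ => ?_
  rw [mul_assoc, mul_assoc, Matrix.trace_mul_comm]
  simp only [← mul_assoc]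

lemma ghat_pullback {d n m : ℕ} (ρ : Fin n → Matrix (Fin d) (Fin d) ℂ) (p : Fin n → ℝ)
    (V : Fin m → Matrix (Fin d) (Fin d) ℂ)
    (E : Equiv.Perm (Fin n) → Matrix (Fin d) (Fin d) ℂ) :
    Ghat ρ p (fun σ => ∑ l, (V l)ᴴ * E σ * V l)
      = Ghat (fun x => ∑ l, V l * ρ x * (V l)ᴴ) p E := by
  unfold Ghat
  refine Finset.sum_congr rfl fun σ _ => Finset.sum_congr rfl fun t _ => ?_
  rw [trace_adj_channel]

/-- post data processing inequality for the quantum guesswork. -/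
theorem quantum_guesswork_post_DPI {d n m : ℕ}
    (ρ : Fin n → Matrix (Fin d) (Fin d) ℂ) (p : Fin n → ℝ)
    (hρ : ∀ x, (ρ x).PosSemidef) (hρtr : ∀ x, (ρ x).trace = 1)
    (hp : ∀ x, 0 ≤ p x) (hpsum : ∑ x, p x = 1)
    (V : Fin m → Matrix (Fin d) (Fin d) ℂ)
    (hV : ∑ l, (V l)ᴴ * V l = 1) :
    QGuesswork ρ p ≤ QGuesswork (fun x => ∑ l, V l * ρ x * (V l)ᴴ) p := by
  by_cases hne : Nonempty {E : Equiv.Perm (Fin n) → Matrix (Fin d) (Fin d) ℂ // IsPOVM E}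
  · refine le_ciInf fun E => ?_
    have hFpovm : IsPOVM (fun σ => ∑ l, (V l)ᴴ * E.1 σ * V l) := by
      constructor
      · exact fun σ => psd_sum fun l => (E.2.1 σ).conjTranspose_mul_mul_same (V l)
      · rw [Finset.sum_comm]
        calc ∑ l, ∑ σ, (V l)ᴴ * E.1 σ * V l
            = ∑ l, (V l)ᴴ * (∑ σ, E.1 σ) * V l := by
              simp [Finset.mul_sum, Finset.sum_mul]
          _ = 1 := by rw [E.2.2]; simpa using hV
    have hbdd : BddBelow (Set.range fun E : {E : Equiv.Perm (Fin n) → Matrix (Fin d) (Fin d) ℂ // IsPOVM E} => Ghat ρ p E.1) := by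
      refine ⟨0, ?_⟩
      rintro _ ⟨E', rfl⟩
      exact ghat_nonneg hρ hp E'.2.1
    exact le_trans (ciInf_le hbdd ⟨_, hFpovm⟩) (le_of_eq (ghat_pullback ρ p V E.1))
  · simp only [QGuesswork, iInf]
    rw [Set.range_eq_empty_iff.mpr (not_nonempty_iff.mp hne),
        Set.range_eq_empty_iff.mpr (not_nonempty_iff.mp hne)]


end
end

section
/- Pre data processing inequality for functions of the label: let f : Fin n → Fin m be any function, and define the pushforward ensemble on Fin m by weights q z = ∑_{x with f x = z} p x and (unnormalized) states τ z with q z • τ z = ∑_{x with f x = z} p x • ρ x (each τ z a density matrix when q z > 0). Then G(τ, q) ≤ G(ρ, p): guessing f(X) from the state is at most as hard as guessing X. -/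
open Matrix BigOperators Finset ComplexOrder

noncomputable section

/-- Auxiliary: a PSD matrix has nonnegative real trace. -/
lemma psd_trace_re_nonneg_s8 {d : ℕ} {M : Matrix (Fin d) (Fin d) ℂ} (hM : M.PosSemidef) :
    0 ≤ M.trace.re := by
  have h : M.trace.re = ∑ i, (M i i).re := by
    simp [Matrix.trace, Matrix.diag, Complex.re_sum]
  rw [h]
  refine Finset.sum_nonneg fun i _ => ?_
  have hre := hM.re_dotProduct_nonneg (Pi.single i 1)
  have e : star (Pi.single i 1 : Fin d → ℂ) ⬝ᵥ M *ᵥ Pi.single i 1 = M i i := by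
    simp [Matrix.mulVec_single, dotProduct, Pi.single_apply, apply_ite]
  rw [e] at hre
  exact hre

open scoped MatrixOrder in
/-- Auxiliary: `Re Tr (A B) ≥ 0` for PSD `A, B`. -/
lemma psd_trace_mul_re_nonneg {d : ℕ} {A B : Matrix (Fin d) (Fin d) ℂ}
    (hA : A.PosSemidef) (hB : B.PosSemidef) : 0 ≤ ((A * B).trace).re := by
  have hs : CFC.sqrt A * CFC.sqrt A = A := CFC.sqrt_mul_sqrt_self A hA.nonneg
  have hher : (CFC.sqrt A)ᴴ = CFC.sqrt A := (CFC.sqrt_nonneg A).posSemidef.isHermitian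
  have key : (A * B).trace = ((CFC.sqrt A)ᴴ * B * CFC.sqrt A).trace := by
    rw [hher, Matrix.trace_mul_cycle, hs]
  rw [key]
  exact psd_trace_re_nonneg_s8 (hB.conjTranspose_mul_mul_same _)

/-- Auxiliary: ranking permutation for a function `g : Fin n → Fin m`. -/
lemma exists_perm_rank {n m : ℕ} (g : Fin n → Fin m) :
    ∃ π : Equiv.Perm (Fin m), ∀ t : Fin n, ((π.symm (g t)).val : ℕ) ≤ t.val := by
  classical
  set r : Fin m → ℕ := fun z =>
    if h : (Finset.univ.filter fun t => g t = z).Nonempty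
    then ((Finset.univ.filter fun t => g t = z).min' h).val else n + z.val with hr
  have hrlt : ∀ z (h : (Finset.univ.filter fun t => g t = z).Nonempty), r z < n := by
    intro z h
    simp only [hr, dif_pos h]
    exact ((Finset.univ.filter fun t => g t = z).min' h).isLt
  have hrinj : Function.Injective r := by
    intro z1 z2 hz
    by_cases h1 : (Finset.univ.filter fun t => g t = z1).Nonempty <;>
      by_cases h2 : (Finset.univ.filter fun t => g t = z2).Nonempty
    · have e1 := Finset.min'_mem _ h1
      have e2 := Finset.min'_mem _ h2
      simp only [Finset.mem_filter] at e1 e2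
      simp only [hr, dif_pos h1, dif_pos h2] at hz
      have : (Finset.univ.filter fun t => g t = z1).min' h1
          = (Finset.univ.filter fun t => g t = z2).min' h2 := Fin.ext hz
      rw [← e1.2, ← e2.2, this]
    · exfalso
      have := hrlt z1 h1
      rw [hz] at this
      simp only [hr, dif_neg h2] at this
      omega
    · exfalso
      have := hrlt z2 h2
      rw [← hz] at this
      simp only [hr, dif_neg h1] at this
      omega
    · simp only [hr, dif_neg h1, dif_neg h2] at hz
      exact Fin.ext (by omega)
  have hcard : ∀ z : Fin m, (Finset.univ.filter fun w => r w < r z).card ≤ r z := by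
    intro z
    have : (Finset.univ.filter fun w => r w < r z).card
        ≤ (Finset.range (r z)).card := by
      refine Finset.card_le_card_of_injOn r ?_ (fun a _ b _ hab => hrinj hab)
      intro w hw
      rw [Finset.mem_coe, Finset.mem_filter] at hw
      simpa [Finset.mem_range] using hw.2
    simpa using this
  have hcardlt : ∀ z : Fin m, (Finset.univ.filter fun w => r w < r z).card < m := by
    intro z
    have hsub : (Finset.univ.filter fun w => r w < r z) ⊆ Finset.univ.erase z := by
      intro w hw
      simp only [Finset.mem_filter] at hw
      refine Finset.mem_erase.mpr ⟨fun h => ?_, Finset.mem_univ _⟩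
      rw [h] at hw; exact lt_irrefl _ hw.2
    have := Finset.card_le_card hsub
    have hm : 0 < m := z.pos
    rw [Finset.card_erase_of_mem (Finset.mem_univ z), Finset.card_univ, Fintype.card_fin] at this
    omega
  set R : Fin m → Fin m := fun z => ⟨(Finset.univ.filter fun w => r w < r z).card, hcardlt z⟩
    with hR
  have hRinj : Function.Injective R := by
    intro z1 z2 hz
    by_contra hne
    have hrne : r z1 ≠ r z2 := fun h => hne (hrinj h)
    rcases lt_or_gt_of_ne hrne with hlt | hlt
    · have hss : (Finset.univ.filter fun w => r w < r z1)
          ⊂ (Finset.univ.filter fun w => r w < r z2) := by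
        refine Finset.ssubset_iff_of_subset ?_ |>.mpr ⟨z1, ?_, ?_⟩
        · intro w hw
          simp only [Finset.mem_filter] at hw ⊢
          exact ⟨hw.1, hw.2.trans hlt⟩
        · simp [hlt]
        · simp
      have := Finset.card_lt_card hss
      have : R z1 ≠ R z2 := fun h => by
        simp only [hR, Fin.mk.injEq] at h; omega
      exact this hz
    · have hss : (Finset.univ.filter fun w => r w < r z2)
          ⊂ (Finset.univ.filter fun w => r w < r z1) := by
        refine Finset.ssubset_iff_of_subset ?_ |>.mpr ⟨z2, ?_, ?_⟩
        · intro w hw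
          simp only [Finset.mem_filter] at hw ⊢
          exact ⟨hw.1, hw.2.trans hlt⟩
        · simp [hlt]
        · simp
      have := Finset.card_lt_card hss
      have : R z1 ≠ R z2 := fun h => by
        simp only [hR, Fin.mk.injEq] at h; omega
      exact this hz
  have hRbij : Function.Bijective R := (Finite.injective_iff_bijective).mp hRinj
  refine ⟨(Equiv.ofBijective R hRbij).symm, fun t => ?_⟩
  have hne : (Finset.univ.filter fun s => g s = g t).Nonempty :=
    ⟨t, by simp⟩
  have hrle : r (g t) ≤ t.val := by
    simp only [hr, dif_pos hne]
    have h := Finset.min'_le (Finset.univ.filter fun s => g s = g t) t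
      (Finset.mem_filter.mpr ⟨Finset.mem_univ t, rfl⟩)
    exact h
  have : (Equiv.ofBijective R hRbij).symm.symm = Equiv.ofBijective R hRbij :=
    Equiv.symm_symm _
  rw [this]
  calc ((Equiv.ofBijective R hRbij) (g t)).val
      = (R (g t)).val := rfl
    _ ≤ r (g t) := hcard (g t)
    _ ≤ t.val := hrle

/-- pre data processing inequality for functions of the label. -/
theorem quantum_guesswork_pre_DPI {d n m : ℕ}
    (ρ : Fin n → Matrix (Fin d) (Fin d) ℂ) (p : Fin n → ℝ)
    (hρ : ∀ x, (ρ x).PosSemidef) (hρtr : ∀ x, (ρ x).trace = 1)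
    (hp : ∀ x, 0 ≤ p x) (hpsum : ∑ x, p x = 1)
    (f : Fin n → Fin m)
    (q : Fin m → ℝ) (τ : Fin m → Matrix (Fin d) (Fin d) ℂ)
    (hq : ∀ z, q z = ∑ x ∈ Finset.univ.filter (fun x => f x = z), p x)
    (hτ : ∀ z, q z • τ z = ∑ x ∈ Finset.univ.filter (fun x => f x = z), p x • ρ x)
    (hτd : ∀ z, 0 < q z → (τ z).PosSemidef ∧ (τ z).trace = 1) :
    QGuesswork τ q ≤ QGuesswork ρ p := by
  classical
  haveI hne1 : Nonempty {E : Equiv.Perm (Fin n) → Matrix (Fin d) (Fin d) ℂ // IsPOVM E} :=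
    ⟨⟨fun σ => if σ = 1 then 1 else 0, fun σ => by
      dsimp only; split
      exacts [Matrix.PosSemidef.one, Matrix.PosSemidef.zero], by simp⟩⟩
  haveI hne2 : Nonempty {E : Equiv.Perm (Fin m) → Matrix (Fin d) (Fin d) ℂ // IsPOVM E} :=
    ⟨⟨fun σ => if σ = 1 then 1 else 0, fun σ => by
      dsimp only; split
      exacts [Matrix.PosSemidef.one, Matrix.PosSemidef.zero], by simp⟩⟩
  refine le_ciInf fun EP => ?_
  obtain ⟨E, hE⟩ := EP
  -- nonnegativity facts
  have hq0 : ∀ z, 0 ≤ q z := by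
    intro z; rw [hq]; exact Finset.sum_nonneg fun x _ => hp x
  -- the pushforward permutation for each strategy outcome
  set Gm : Equiv.Perm (Fin n) → Equiv.Perm (Fin m) :=
    fun σ => Classical.choose (exists_perm_rank (fun t => f (σ t))) with hGmdef
  have hGm : ∀ σ (t : Fin n), (((Gm σ).symm (f (σ t))).val : ℕ) ≤ t.val :=
    fun σ => Classical.choose_spec (exists_perm_rank (fun t => f (σ t)))
  -- the induced POVM on S_m
  set F : Equiv.Perm (Fin m) → Matrix (Fin d) (Fin d) ℂ :=
    fun π => ∑ σ ∈ Finset.univ.filter (fun σ => Gm σ = π), E σ with hFdef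
  have hF : IsPOVM F := by
    constructor
    · intro π
      refine Finset.sum_induction _ _ (fun A B hA hB => hA.add hB) Matrix.PosSemidef.zero
        (fun σ _ => hE.1 σ)
    · rw [← hE.2]
      exact Finset.sum_fiberwise _ _ _
  -- key trace identity
  have key : ∀ (M : Matrix (Fin d) (Fin d) ℂ) (z : Fin m),
      q z * ((M * τ z).trace).re
        = ∑ x ∈ Finset.univ.filter (fun x => f x = z), p x * ((M * ρ x).trace).re := by
    intro M z
    have h1 : M * (q z • τ z) = M * (∑ x ∈ Finset.univ.filter (fun x => f x = z), p x • ρ x) := by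
      rw [hτ]
    rw [Matrix.mul_smul, Finset.mul_sum] at h1
    simp_rw [Matrix.mul_smul] at h1
    have h2 := congrArg (fun N : Matrix (Fin d) (Fin d) ℂ => (Matrix.trace N).re) h1
    simp only [Matrix.trace_sum, Matrix.trace_smul, Complex.re_sum] at h2
    simpa [Complex.real_smul, Complex.re_ofReal_mul] using h2
  -- lower bound 0 for Ghat τ q over POVMs
  have hGhat_nonneg : ∀ F' : {E : Equiv.Perm (Fin m) → Matrix (Fin d) (Fin d) ℂ // IsPOVM E},
      0 ≤ Ghat τ q F'.1 := by
    rintro ⟨F', hF'⟩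
    refine Finset.sum_nonneg fun π _ => Finset.sum_nonneg fun s _ => ?_
    rcases eq_or_lt_of_le (hq0 (π s)) with h | h
    · rw [← h]; simp
    · have := psd_trace_mul_re_nonneg (hF'.1 π) (hτd (π s) h).1
      positivity
  have h1 : QGuesswork τ q ≤ Ghat τ q F := by
    apply ciInf_le _ (⟨F, hF⟩ : {E : Equiv.Perm (Fin m) → Matrix (Fin d) (Fin d) ℂ // IsPOVM E})
    exact ⟨0, by rintro _ ⟨F', rfl⟩; exact hGhat_nonneg F'⟩
  refine h1.trans ?_
  -- expand Ghat τ q F fiberwise over σ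
  have expand : Ghat τ q F
      = ∑ σ : Equiv.Perm (Fin n), ∑ s : Fin m,
          ((s.val : ℝ) + 1) * q ((Gm σ) s) * ((E σ * τ ((Gm σ) s)).trace.re) := by
    rw [Ghat]
    have hinner : ∀ π : Equiv.Perm (Fin m),
        ∑ s : Fin m, ((s.val : ℝ) + 1) * q (π s) * ((F π * τ (π s)).trace.re)
          = ∑ σ ∈ Finset.univ.filter (fun σ => Gm σ = π),
              ∑ s : Fin m, ((s.val : ℝ) + 1) * q (π s) * ((E σ * τ (π s)).trace.re) := by
      intro π
      rw [Finset.sum_comm]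
      refine Finset.sum_congr rfl fun s _ => ?_
      rw [hFdef]
      simp only [Finset.sum_mul, Matrix.trace_sum, Complex.re_sum, Finset.mul_sum]
    simp_rw [hinner]
    rw [← Finset.sum_fiberwise Finset.univ (fun σ => Gm σ)
      (fun σ => ∑ s : Fin m, ((s.val : ℝ) + 1) * q ((Gm σ) s) * ((E σ * τ ((Gm σ) s)).trace.re))]
    refine Finset.sum_congr rfl fun π _ => Finset.sum_congr rfl fun σ hσ => ?_
    simp only [Finset.mem_filter] at hσ
    rw [hσ.2]
  rw [expand, Ghat]
  refine Finset.sum_le_sum fun σ _ => ?_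
  -- per-σ inequality
  have hnn : ∀ x : Fin n, 0 ≤ p x * ((E σ * ρ x).trace.re) :=
    fun x => mul_nonneg (hp x) (psd_trace_mul_re_nonneg (hE.1 σ) (hρ x))
  have step1 : ∑ s : Fin m, ((s.val : ℝ) + 1) * q ((Gm σ) s) * ((E σ * τ ((Gm σ) s)).trace.re)
      = ∑ x : Fin n, ((((Gm σ).symm (f x)).val : ℝ) + 1) * (p x * ((E σ * ρ x).trace.re)) := by
    have : ∀ s : Fin m, ((s.val : ℝ) + 1) * q ((Gm σ) s) * ((E σ * τ ((Gm σ) s)).trace.re)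
        = ∑ x ∈ Finset.univ.filter (fun x => (Gm σ).symm (f x) = s),
            ((((Gm σ).symm (f x)).val : ℝ) + 1) * (p x * ((E σ * ρ x).trace.re)) := by
      intro s
      rw [mul_assoc, key (E σ) ((Gm σ) s), Finset.mul_sum]
      have hfilter : Finset.univ.filter (fun x => f x = (Gm σ) s)
          = Finset.univ.filter (fun x => (Gm σ).symm (f x) = s) := by
        refine Finset.filter_congr fun x _ => ?_
        simp [Equiv.symm_apply_eq]
      rw [hfilter]
      refine Finset.sum_congr rfl fun x hx => ?_
      simp only [Finset.mem_filter] at hx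
      rw [hx.2]
    simp_rw [this]
    exact Finset.sum_fiberwise _ _ _
  rw [step1]
  have step2 : ∑ x : Fin n, ((((Gm σ).symm (f x)).val : ℝ) + 1) * (p x * ((E σ * ρ x).trace.re))
      ≤ ∑ x : Fin n, (((σ.symm x).val : ℝ) + 1) * (p x * ((E σ * ρ x).trace.re)) := by
    refine Finset.sum_le_sum fun x _ => ?_
    refine mul_le_mul_of_nonneg_right ?_ (hnn x)
    have h := hGm σ (σ.symm x)
    rw [Equiv.apply_symm_apply] at h
    have : (((Gm σ).symm (f x)).val : ℝ) ≤ ((σ.symm x).val : ℝ) := by exact_mod_cast h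
    linarith
  refine step2.trans_eq ?_
  rw [← Equiv.sum_comp σ (fun x => (((σ.symm x).val : ℝ) + 1) * (p x * ((E σ * ρ x).trace.re)))]
  refine Finset.sum_congr rfl fun t _ => ?_
  rw [Equiv.symm_apply_apply]
  ring


end
end
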